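/- Let G be a finite connected graph. Then the boundary ∂(G) of G equals the set of all vertices u of G for which there exists a vertex v such that u and v are mutually maximally distant in G. -/

import Mathlib

open SimpleGraph

variable {V : Type*}

/-- `u` is maximally distant from `v` in `G`: every neighbor `w` of `u`
satisfies `d(v,w) ≤ d(v,u)`. -/
def MaxDistant (G : SimpleGraph V) (u v : V) : Prop :=
  ∀ w, G.Adj u w → G.dist v w ≤ G.dist v u

/-- `u` and `v` are mutually maximally distant in `G`. -/
def MMD (G : SimpleGraph V) (u v : V) : Prop :=
  MaxDistant G u v ∧ MaxDistant G v u

/-- The boundary of `G`: vertices maximally distant from some vertex. -/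
def boundary (G : SimpleGraph V) : Set V := {u | ∃ v, MaxDistant G u v}

/-- The strong resolving graph on the whole vertex set (`G_{SR+I}`):
two vertices are adjacent iff they are distinct and mutually maximally distant. -/
def srGraphI (G : SimpleGraph V) : SimpleGraph V where
  Adj u v := u ≠ v ∧ MMD G u v
  symm := by
    refine ⟨?_⟩
    rintro u v ⟨hne, h1, h2⟩
    exact ⟨hne.symm, h2, h1⟩
  loopless := by
    refine ⟨?_⟩
    rintro u ⟨hne, _⟩
    exact hne rfl

/-- The strong resolving graph `G_SR`, with vertex set the boundary of `G`. -/
def srGraph (G : SimpleGraph V) : SimpleGraph (boundary G) :=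
  (srGraphI G).induce (boundary G)

/-- `u` and `v` are true twins: distinct vertices with equal closed neighborhoods. -/
def TrueTwins (G : SimpleGraph V) (u v : V) : Prop :=
  u ≠ v ∧ insert u (G.neighborSet u) = insert v (G.neighborSet v)

/-- `u` and `v` are false twins: distinct vertices with equal open neighborhoods. -/
def FalseTwins (G : SimpleGraph V) (u v : V) : Prop :=
  u ≠ v ∧ G.neighborSet u = G.neighborSet v

/-- A vertex is simplicial if its neighborhood induces a complete graph. -/
def IsSimplicial (G : SimpleGraph V) (v : V) : Prop :=
  ∀ a b, G.Adj v a → G.Adj v b → a ≠ b → G.Adj a b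

/-- `w` strongly resolves `u` and `v`. -/
def StronglyResolves (G : SimpleGraph V) (w u v : V) : Prop :=
  G.dist w u = G.dist w v + G.dist v u ∨ G.dist w v = G.dist w u + G.dist u v

/-- `S` is a strong metric generator for `G`. -/
def IsStrongMetricGenerator (G : SimpleGraph V) (S : Set V) : Prop :=
  ∀ u v : V, u ≠ v → ∃ w ∈ S, StronglyResolves G w u v

/-- The strong metric dimension of `G`. -/
noncomputable def sdim (G : SimpleGraph V) : ℕ :=
  sInf {n | ∃ S : Set V, S.ncard = n ∧ IsStrongMetricGenerator G S}

/-- `S` is a vertex cover of `H`. -/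
def IsVertexCover (H : SimpleGraph V) (S : Set V) : Prop :=
  ∀ u v : V, H.Adj u v → u ∈ S ∨ v ∈ S

/-- The vertex cover number of `H`. -/
noncomputable def vertexCoverNumber (H : SimpleGraph V) : ℕ :=
  sInf {n | ∃ S : Set V, S.ncard = n ∧ _root_.IsVertexCover H S}

/-- The graph `G*`: distinct vertices adjacent iff at distance at least two
or true twins. -/
def GStar (G : SimpleGraph V) : SimpleGraph V where
  Adj u v := u ≠ v ∧ (2 ≤ G.dist u v ∨ TrueTwins G u v)
  symm := by
    refine ⟨?_⟩
    rintro u v ⟨hne, h | h⟩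
    · exact ⟨hne.symm, Or.inl (by rwa [G.dist_comm])⟩
    · exact ⟨hne.symm, Or.inr ⟨h.1.symm, h.2.symm⟩⟩
  loopless := by
    refine ⟨?_⟩
    rintro u ⟨hne, _⟩
    exact hne rfl

/-- The direct (tensor) product of two graphs. -/
def DirectProd {α β : Type*} (G : SimpleGraph α) (H : SimpleGraph β) :
    SimpleGraph (α × β) where
  Adj x y := G.Adj x.1 y.1 ∧ H.Adj x.2 y.2
  symm := ⟨fun _ _ h => ⟨h.1.symm, h.2.symm⟩⟩
  loopless := ⟨fun x h => G.irrefl h.1⟩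

/-- The strong product of two graphs. -/
def StrongProd {α β : Type*} (G : SimpleGraph α) (H : SimpleGraph β) :
    SimpleGraph (α × β) where
  Adj x y := x ≠ y ∧ (x.1 = y.1 ∨ G.Adj x.1 y.1) ∧ (x.2 = y.2 ∨ H.Adj x.2 y.2)
  symm := by
    refine ⟨?_⟩
    rintro x y ⟨hne, h1, h2⟩
    exact ⟨hne.symm, h1.imp Eq.symm Adj.symm, h2.imp Eq.symm Adj.symm⟩
  loopless := by
    refine ⟨?_⟩
    rintro x ⟨hne, _⟩
    exact hne rfl

/-- The Cartesian sum (disjunctive product) of two graphs. -/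
def CartSum {α β : Type*} (G : SimpleGraph α) (H : SimpleGraph β) :
    SimpleGraph (α × β) where
  Adj x y := G.Adj x.1 y.1 ∨ H.Adj x.2 y.2
  symm := ⟨fun _ _ h => h.imp Adj.symm Adj.symm⟩
  loopless := ⟨fun x h => h.elim (fun h' => G.irrefl h') (fun h' => H.irrefl h')⟩

/-- The lexicographic product of two graphs. -/
def LexProd {α β : Type*} (G : SimpleGraph α) (H : SimpleGraph β) :
    SimpleGraph (α × β) where
  Adj x y := G.Adj x.1 y.1 ∨ (x.1 = y.1 ∧ H.Adj x.2 y.2)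
  symm := ⟨fun _ _ h => h.imp Adj.symm (fun h => ⟨h.1.symm, h.2.symm⟩)⟩
  loopless := ⟨fun x h => h.elim (fun h' => G.irrefl h') (fun h => H.irrefl h.2)⟩

/-- The disjoint union of `n` copies of the complete graph on `m` vertices. -/
def CopiesComplete (n m : ℕ) : SimpleGraph (Fin n × Fin m) where
  Adj x y := x.1 = y.1 ∧ x.2 ≠ y.2
  symm := ⟨fun _ _ h => ⟨h.1.symm, h.2.symm⟩⟩
  loopless := ⟨fun x h => h.2 rfl⟩

/-- Every pair of vertices lies on a common cycle of length five. -/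
def C5Connected (G : SimpleGraph V) : Prop :=
  ∀ u v : V, ∃ (w : V) (c : G.Walk w w), c.IsCycle ∧ c.length = 5 ∧
    u ∈ c.support ∧ v ∈ c.support

namespace MaxDistant

variable {G : SimpleGraph V} {u v w : V}

theorem of_adj_of_dist_lt (hG : G.Connected) (h : MaxDistant G u v) (hvw : G.Adj v w)
    (hlt : G.dist u v < G.dist u w) : MaxDistant G u w := by
  intro x hux
  calc G.dist w x ≤ G.dist w v + G.dist v x := hG.dist_triangle
    _ = 1 + G.dist v x := by rw [dist_eq_one_iff_adj.mpr hvw.symm]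
    _ ≤ 1 + G.dist v u := by grw [h x hux]
    _ ≤ G.dist w u := by rw [dist_comm, G.dist_comm (u := w)]; omega

/-- Take `v'` as far from `u` as possible among the vertices from which `u` is maximally
distant; a neighbour of `v'` farther from `u` would contradict this choice. -/
theorem exists_mmd [Finite V] (hG : G.Connected) (h : MaxDistant G u v) : ∃ v', MMD G u v' := by
  obtain ⟨v', hv', hmax⟩ :=
    Set.exists_max_image {w | MaxDistant G u w} (G.dist u) (Set.toFinite _) ⟨v, h⟩
  refine ⟨v', hv', fun w hw => ?_⟩
  by_contra! hlt
  exact (hmax w (hv'.of_adj_of_dist_lt hG hw hlt)).not_gt hlt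

end MaxDistant

theorem stmt0 [Fintype V] (G : SimpleGraph V) (hG : G.Connected) :
    boundary G = {u | ∃ v, MMD G u v} := by
  ext u
  constructor
  · rintro ⟨v, h⟩
    exact h.exists_mmd hG
  · rintro ⟨v, h, -⟩
    exact ⟨v, h⟩
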